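/- arXiv:0810.5479 — 4 statements merged into one kernel-verified Lean document; each statement's English description precedes it below -/
import Mathlib

section
/- Let (W,F) be a nonzero filtered vector space, V ⊆ W a nonzero subspace equipped with the induced filtration, and ε = 1 − rank(V)/rank(W). Then for every bounded Borel function h on ℝ, |∫ h dν_W − ∫ h dν_V| ≤ 2ε·‖h‖_sup. -/
/-!
Since `dim F_t W = dim (F_t W ∩ V) + dim (F_t W / (F_t W ∩ V))`, the measure
`ν_W - (rank V / rank W) ν_V` is `1 / rank W` times the spectral measure of the image filtration
of `F` on `W / V`; in particular it is positive, of total mass `ε`. So `ν_W = (1 - ε) ν_V + ρ`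
with `ρ ≥ 0`, `ρ(ℝ) = ε`, and `∫ h dν_W - ∫ h dν_V = ∫ h dρ - ε ∫ h dν_V` has absolute value
at most `2 ε ‖h‖_sup`.
-/

open Module MeasureTheory Set Filter Topology

lemma exists_lt_forall_Icc_eq_of_eq_iInf {α : Type*} [CompleteLattice α] [WellFoundedLT α]
    {F : ℝ → α} (hF : Antitone F) (hlc : ∀ t, F t = ⨅ (s : ℝ) (_ : s < t), F s) (t : ℝ) :
    ∃ s < t, ∀ s' ∈ Icc s t, F s' = F t := by
  obtain ⟨_, ⟨s, hst, rfl⟩, hmin⟩ :=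
    wellFounded_lt.has_min (F '' Iio t) ⟨F (t - 1), t - 1, by simp, rfl⟩
  have hFs : F s = F t := by
    refine le_antisymm ?_ (hF hst.le)
    rw [hlc t]
    refine le_iInf₂ fun s' hs' => ?_
    rcases le_total s s' with h | h
    · exact (eq_of_le_of_not_lt (hF h) (hmin _ ⟨s', hs', rfl⟩)).ge
    · exact hF h
  exact ⟨s, hst, fun s' hs' => le_antisymm (hFs ▸ hF hs'.1) (hF hs'.2)⟩

lemma Submodule.finrank_map_add_finrank_inf_ker {K W Q : Type*} [Field K] [AddCommGroup W]
    [Module K W] [AddCommGroup Q] [Module K Q] [FiniteDimensional K W] (f : W →ₗ[K] Q)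
    (p : Submodule K W) :
    finrank K (p.map f) + finrank K ↥(p ⊓ LinearMap.ker f) = finrank K p := by
  rw [← LinearMap.range_domRestrict, ← (comapSubtypeEquivOfLe inf_le_left).finrank_eq,
    comap_inf, comap_subtype_self, top_inf_eq, ← LinearMap.ker_domRestrict]
  exact LinearMap.finrank_range_add_finrank_ker _

lemma exists_measure_Ici_eq_of_antitone {φ : ℝ → ℝ} (hφ : Antitone φ)
    (hlc : ∀ t, ContinuousWithinAt φ (Iic t) t) {a : ℝ}
    (hbot : Tendsto φ atBot (𝓝 a)) (htop : Tendsto φ atTop (𝓝 0)) :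
    ∃ ρ : Measure ℝ, ρ univ = ENNReal.ofReal a ∧ ∀ t, ρ (Ici t) = ENNReal.ofReal (φ t) := by
  let f : StieltjesFunction ℝ :=
    ⟨fun u => φ (-u), fun _ _ huv => hφ (neg_le_neg huv), fun u =>
      (hlc (-u)).comp continuous_neg.continuousWithinAt fun _ hv => mem_Iic.2 (neg_le_neg hv)⟩
  have hf_bot : Tendsto f atBot (𝓝 0) := htop.comp tendsto_neg_atBot_atTop
  have hf_top : Tendsto f atTop (𝓝 a) := hbot.comp tendsto_neg_atTop_atBot
  refine ⟨f.measure.map Neg.neg, ?_, fun t => ?_⟩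
  · rw [Measure.map_apply measurable_neg MeasurableSet.univ, preimage_univ,
      f.measure_univ hf_bot hf_top, sub_zero]
  · rw [Measure.map_apply measurable_neg measurableSet_Ici, neg_preimage, neg_Ici,
      f.measure_Iic hf_bot, sub_zero]
    simp [f]

lemma exists_measure_Ici_eq_finrank_map {K E Q : Type*} [Field K] [AddCommGroup E] [Module K E]
    [FiniteDimensional K E] [AddCommGroup Q] [Module K Q] (f : E →ₗ[K] Q)
    {F : ℝ → Submodule K E} (hF : Antitone F) (hlc : ∀ t, F t = ⨅ (s : ℝ) (_ : s < t), F s)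
    (hbot : ∃ t₀, ∀ t ≥ t₀, F t = ⊥) (htop : ∃ t₁, ∀ t ≤ t₁, F t = ⊤) :
    ∃ ρ : Measure ℝ, ρ univ = finrank K (LinearMap.range f) ∧
      ∀ t, ρ (Ici t) = finrank K ((F t).map f) := by
  obtain ⟨t₀, ht₀⟩ := hbot
  obtain ⟨t₁, ht₁⟩ := htop
  set φ : ℝ → ℝ := fun t => finrank K ((F t).map f)
  have hφ : Antitone φ := fun s t hst =>
    Nat.cast_le.2 (Submodule.finrank_mono (Submodule.map_mono (hF hst)))
  have hφ_lc (t : ℝ) : ContinuousWithinAt φ (Iic t) t := by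
    obtain ⟨s, hst, hs⟩ := exists_lt_forall_Icc_eq_of_eq_iInf hF hlc t
    refine tendsto_const_nhds.congr' ?_
    filter_upwards [Icc_mem_nhdsLE hst] with s' hs' using by
      dsimp only [φ]; rw [hs s' hs']
  have hφ_bot : Tendsto φ atBot (𝓝 (finrank K (LinearMap.range f))) := by
    refine tendsto_const_nhds.congr' ?_
    filter_upwards [eventually_le_atBot t₁] with t ht using by
      dsimp only [φ]; rw [ht₁ t ht, Submodule.map_top]
  have hφ_top : Tendsto φ atTop (𝓝 0) := by
    refine tendsto_const_nhds.congr' ?_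
    filter_upwards [eventually_ge_atTop t₀] with t ht using by
      dsimp only [φ]; rw [ht₀ t ht, Submodule.map_bot, finrank_bot, Nat.cast_zero]
  simpa only [φ, ENNReal.ofReal_natCast] using
    exists_measure_Ici_eq_of_antitone hφ hφ_lc hφ_bot hφ_top

lemma measure_eq_smul_add_smul_of_measureReal_Ici {μ ν ρ : Measure ℝ} [IsFiniteMeasure μ]
    [IsFiniteMeasure ν] [IsFiniteMeasure ρ] {a b : ℝ} (ha : 0 ≤ a) (hb : 0 ≤ b)
    (h : ∀ t, μ.real (Ici t) = a * ν.real (Ici t) + b * ρ.real (Ici t)) :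
    μ = ENNReal.ofReal a • ν + ENNReal.ofReal b • ρ := by
  refine Measure.ext_of_Ici _ _ fun t => ?_
  have ht := h t
  simp only [measureReal_def] at ht
  rw [Measure.add_apply, Measure.smul_apply, Measure.smul_apply, smul_eq_mul, smul_eq_mul,
    ← ENNReal.ofReal_toReal (measure_ne_top μ _), ht,
    ENNReal.ofReal_add (by positivity) (by positivity), ENNReal.ofReal_mul ha,
    ENNReal.ofReal_mul hb, ENNReal.ofReal_toReal (measure_ne_top ν _),
    ENNReal.ofReal_toReal (measure_ne_top ρ _)]

lemma abs_integral_sub_integral_le_of_eq_smul_add {α : Type*} [MeasurableSpace α]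
    {μ ν ρ : Measure α} [IsProbabilityMeasure μ] [IsProbabilityMeasure ν] [IsFiniteMeasure ρ]
    {c : ℝ} (hc : 0 ≤ c) (hμ : μ = ENNReal.ofReal c • ν + ρ) {f : α → ℝ} (hf : Measurable f)
    {C : ℝ} (hC : ∀ x, |f x| ≤ C) :
    |∫ x, f x ∂μ - ∫ x, f x ∂ν| ≤ 2 * (1 - c) * C := by
  have hmass : ρ.real univ = 1 - c := by
    have := congrArg (fun m : Measure α => m.real univ) hμ
    simp only [probReal_univ, Measure.smul_apply, measure_univ, smul_eq_mul, mul_one, ne_eq,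
      ENNReal.ofReal_ne_top, not_false_eq_true, measure_ne_top, measureReal_add_apply,
      measureReal_ennreal_smul_apply, hc, ENNReal.toReal_ofReal] at this
    linarith
  have hc₁ : 0 ≤ 1 - c := hmass ▸ measureReal_nonneg
  have hC' (m : Measure α) : ∀ᵐ x ∂m, ‖f x‖ ≤ C := ae_of_all _ hC
  have hint (m : Measure α) [IsFiniteMeasure m] : Integrable f m :=
    (integrable_const C).mono' hf.aestronglyMeasurable (hC' m)
  have hν : |∫ x, f x ∂ν| ≤ C := by
    simpa using norm_integral_le_of_norm_le_const (hC' ν)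
  have hρ : |∫ x, f x ∂ρ| ≤ (1 - c) * C := by
    simpa [hmass, mul_comm] using norm_integral_le_of_norm_le_const (hC' ρ)
  rw [hμ, integral_add_measure ((hint ν).smul_measure ENNReal.ofReal_ne_top) (hint ρ),
    integral_smul_measure, ENNReal.toReal_ofReal hc, smul_eq_mul]
  calc |c * ∫ x, f x ∂ν + ∫ x, f x ∂ρ - ∫ x, f x ∂ν|
      = |∫ x, f x ∂ρ - (1 - c) * ∫ x, f x ∂ν| := by ring_nf
    _ ≤ |∫ x, f x ∂ρ| + (1 - c) * |∫ x, f x ∂ν| := by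
        rw [← abs_of_nonneg hc₁, ← abs_mul, abs_of_nonneg hc₁]
        exact abs_sub _ _
    _ ≤ (1 - c) * C + (1 - c) * C := by gcongr
    _ = 2 * (1 - c) * C := by ring

theorem stmt1_general {K W : Type*} [Field K] [AddCommGroup W] [Module K W]
    [FiniteDimensional K W]
    (F : ℝ → Submodule K W)
    (hF_anti : Antitone F)
    (hF_bot : ∃ t₀ : ℝ, ∀ t ≥ t₀, F t = ⊥)
    (hF_top : ∃ t₁ : ℝ, ∀ t ≤ t₁, F t = ⊤)
    (hF_leftcont : ∀ t : ℝ, F t = ⨅ (s : ℝ) (_ : s < t), F s)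
    (V : Submodule K W) (hV : V ≠ ⊥)
    (ε : ℝ) (hε : ε = 1 - (finrank K V : ℝ) / finrank K W)
    (νW νV : Measure ℝ)
    (hνW : IsProbabilityMeasure νW)
    (hνWchar : ∀ t : ℝ, (νW (Ici t)).toReal = (finrank K (F t) : ℝ) / finrank K W)
    (hνV : IsProbabilityMeasure νV)
    (hνVchar : ∀ t : ℝ, (νV (Ici t)).toReal
      = (finrank K ↥(F t ⊓ V) : ℝ) / finrank K V)
    (h : ℝ → ℝ) (hmeas : Measurable h) (C : ℝ) (hbound : ∀ x, |h x| ≤ C) :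
    |(∫ x, h x ∂νW) - ∫ x, h x ∂νV| ≤ 2 * ε * C := by
  have hV₀ : (0 : ℝ) < finrank K V := by
    have := Submodule.nontrivial_iff_ne_bot.mpr hV
    exact_mod_cast finrank_pos
  have hVW : (finrank K V : ℝ) ≤ finrank K W := by exact_mod_cast Submodule.finrank_le V
  have hW₀ : (0 : ℝ) < finrank K W := hV₀.trans_le hVW
  obtain ⟨ρ, hρ_univ, hρ_Ici⟩ :=
    exists_measure_Ici_eq_finrank_map V.mkQ hF_anti hF_leftcont hF_bot hF_top
  have : IsFiniteMeasure ρ := ⟨by simp [hρ_univ]⟩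
  have := ρ.smul_finite (ENNReal.ofReal_ne_top (r := (finrank K W : ℝ)⁻¹))
  have hsplit : νW = ENNReal.ofReal (finrank K V / finrank K W) • νV
      + ENNReal.ofReal (finrank K W)⁻¹ • ρ := by
    refine measure_eq_smul_add_smul_of_measureReal_Ici (by positivity) (by positivity) fun t => ?_
    have hrank := Submodule.finrank_map_add_finrank_inf_ker V.mkQ (F t)
    rw [Submodule.ker_mkQ] at hrank
    simp only [measureReal_def, hνWchar, hνVchar, hρ_Ici, ENNReal.toReal_natCast, ← hrank]
    field_simp
    push_cast
    ring
  rw [hε]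
  exact abs_integral_sub_integral_le_of_eq_smul_add (by positivity) hsplit hmeas hbound

/-- Let `(W, F)` be a nonzero filtered vector space, `V ⊆ W` a
nonzero subspace with the induced filtration, and `ε = 1 - rank V / rank W`.
Then for every bounded Borel function `h` on `ℝ`,
`|∫ h dν_W - ∫ h dν_V| ≤ 2 ε ‖h‖_sup`. -/
theorem stmt1 {K W : Type*} [Field K] [AddCommGroup W] [Module K W]
    [FiniteDimensional K W] [Nontrivial W]
    (F : ℝ → Submodule K W)
    (hF_anti : Antitone F)
    (hF_bot : ∃ t₀ : ℝ, ∀ t ≥ t₀, F t = ⊥)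
    (hF_top : ∃ t₁ : ℝ, ∀ t ≤ t₁, F t = ⊤)
    (hF_leftcont : ∀ t : ℝ, F t = ⨅ (s : ℝ) (_ : s < t), F s)
    (V : Submodule K W) (hV : V ≠ ⊥)
    (ε : ℝ) (hε : ε = 1 - (finrank K V : ℝ) / finrank K W)
    (νW νV : Measure ℝ)
    (hνW : IsProbabilityMeasure νW)
    (hνWchar : ∀ t : ℝ, (νW (Ici t)).toReal = (finrank K (F t) : ℝ) / finrank K W)
    (hνV : IsProbabilityMeasure νV)
    (hνVchar : ∀ t : ℝ, (νV (Ici t)).toReal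
      = (finrank K ↥(F t ⊓ V) : ℝ) / finrank K V)
    (h : ℝ → ℝ) (hmeas : Measurable h) (C : ℝ) (hbound : ∀ x, |h x| ≤ C) :
    |(∫ x, h x ∂νW) - ∫ x, h x ∂νV| ≤ 2 * ε * C :=
  stmt1_general F hF_anti hF_bot hF_top hF_leftcont V hV ε hε νW νV hνW hνWchar hνV hνVchar h hmeas
    C hbound
end

section
/- Let (V,F) and (W,G) be nonzero filtered vector spaces, φ: V → W an isomorphism of vector spaces, and a ∈ ℝ such that φ(F_t V) ⊆ G_{t+a} W for all t ∈ ℝ. Then ν_W ≻ τ_a ν_V, i.e., for every bounded increasing function h on ℝ, ∫ h(x+a) ν_V(dx) ≤ ∫ h(x) ν_W(dx). -/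
/-!
Transporting the filtration along `φ` gives `rank F_{t-a} V ≤ rank G_t W`, and `rank V = rank W`,
so the translated measure `τ_a ν_V` gives every half-line `[t, ∞)` at most the mass `ν_W` does.
Every superlevel set of a monotone function is an upper set of `ℝ`, and the bound on half-lines
extends to all upper sets; the layer cake formula then compares the integrals.
-/

open Module MeasureTheory Set

section StochasticOrder

variable {μ ν : Measure ℝ}

theorem IsUpperSet.measure_le_of_measure_Ici_le (hμν : ∀ t, μ (Ici t) ≤ ν (Ici t))
    {S : Set ℝ} (hS : IsUpperSet S) : μ S ≤ ν S := by
  by_cases hmin : ∃ u, IsLeast S u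
  · obtain ⟨u, hu⟩ := hmin
    rw [show S = Ici u from (hS.Ici_subset hu.1).antisymm' fun x hx => hu.2 hx]
    exact hμν u
  -- Without a least element, `S` is the countable directed union of the `Ici q`, `q ∈ S ∩ ℚ`.
  let I : {q : ℚ // (q : ℝ) ∈ S} → Set ℝ := fun q => Ici (q : ℝ)
  have hS_eq : S = ⋃ q, I q := by
    refine Subset.antisymm (fun x hx => ?_) (iUnion_subset fun q => hS.Ici_subset q.2)
    obtain ⟨y, hyS, hyx⟩ : ∃ y ∈ S, y < x := by
      simpa [IsLeast, lowerBounds, hx] using not_exists.1 hmin x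
    obtain ⟨q, hyq, hqx⟩ := exists_rat_btwn hyx
    exact mem_iUnion.2 ⟨⟨q, hS hyq.le hyS⟩, hqx.le⟩
  have hI : Directed (· ⊆ ·) I :=
    Antitone.directed_le fun q r hqr => Ici_subset_Ici.2 (by exact_mod_cast hqr)
  rw [hS_eq, hI.measure_iUnion, hI.measure_iUnion]
  exact iSup_mono fun q => hμν q

theorem lintegral_le_lintegral_of_measure_Ici_le (hμν : ∀ t, μ (Ici t) ≤ ν (Ici t))
    {f : ℝ → ℝ} (hf : Monotone f) (hf₀ : 0 ≤ f) :
    ∫⁻ x, ENNReal.ofReal (f x) ∂μ ≤ ∫⁻ x, ENNReal.ofReal (f x) ∂ν := by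
  simp only [lintegral_eq_lintegral_meas_le _ (ae_of_all _ hf₀) hf.measurable.aemeasurable]
  refine lintegral_mono fun t => IsUpperSet.measure_le_of_measure_Ici_le hμν ?_
  exact fun x y hxy hx => le_trans hx (hf hxy)

theorem integral_le_integral_of_measure_Ici_le [IsProbabilityMeasure μ] [IsProbabilityMeasure ν]
    (hμν : ∀ t, μ (Ici t) ≤ ν (Ici t)) {h : ℝ → ℝ} (hh : Monotone h) {C : ℝ}
    (hC : ∀ x, |h x| ≤ C) : ∫ x, h x ∂μ ≤ ∫ x, h x ∂ν := by
  have hint : ∀ (ρ : Measure ℝ) [IsFiniteMeasure ρ], Integrable h ρ := fun ρ _ =>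
    .of_bound hh.measurable.aestronglyMeasurable C (ae_of_all _ hC)
  let g : ℝ → ℝ := fun x => h x + C
  have hg₀ : 0 ≤ g := fun x => by simpa [g, neg_le_iff_add_nonneg] using (abs_le.1 (hC x)).1
  have hg : Monotone g := fun x y hxy => by simpa [g] using hh hxy
  have hshift : ∀ (ρ : Measure ℝ) [IsProbabilityMeasure ρ], ∫ x, g x ∂ρ = ∫ x, h x ∂ρ + C :=
    fun ρ _ => by simp [g, integral_add (hint ρ) (integrable_const C)]
  suffices ∫ x, g x ∂μ ≤ ∫ x, g x ∂ν by linarith [hshift μ, hshift ν]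
  have hgν : Integrable g ν := (hint ν).add (integrable_const C)
  rw [integral_eq_lintegral_of_nonneg_ae (ae_of_all _ hg₀) hg.measurable.aestronglyMeasurable,
    integral_eq_lintegral_of_nonneg_ae (ae_of_all _ hg₀) hgν.aestronglyMeasurable]
  exact ENNReal.toReal_mono hgν.lintegral_lt_top.ne
    (lintegral_le_lintegral_of_measure_Ici_le hμν hg hg₀)

end StochasticOrder

theorem stmt2_general {K V W : Type*} [Field K]
    [AddCommGroup V] [Module K V]
    [AddCommGroup W] [Module K W] [FiniteDimensional K W]
    (F : ℝ → Submodule K V) (G : ℝ → Submodule K W)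
    (φ : V ≃ₗ[K] W) (a : ℝ)
    (hcomp : ∀ t : ℝ, (F t).map (φ : V →ₗ[K] W) ≤ G (t + a))
    (νV νW : Measure ℝ)
    (hνV : IsProbabilityMeasure νV)
    (hνVchar : ∀ t : ℝ, (νV (Ici t)).toReal = (finrank K (F t) : ℝ) / finrank K V)
    (hνW : IsProbabilityMeasure νW)
    (hνWchar : ∀ t : ℝ, (νW (Ici t)).toReal = (finrank K (G t) : ℝ) / finrank K W)
    (h : ℝ → ℝ) (hmono : Monotone h) (C : ℝ) (hbound : ∀ x, |h x| ≤ C) :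
    (∫ x, h (x + a) ∂νV) ≤ ∫ x, h x ∂νW := by
  have hshift : Measurable fun x : ℝ => x + a := measurable_add_const a
  have : IsProbabilityMeasure (νV.map fun x => x + a) :=
    Measure.isProbabilityMeasure_map hshift.aemeasurable
  have hrank : ∀ t, finrank K (F (t - a)) ≤ finrank K (G t) := fun t => by
    have := Submodule.finrank_mono (hcomp (t - a))
    rwa [sub_add_cancel, φ.finrank_map_eq] at this
  have hIci : ∀ t, (νV.map fun x => x + a) (Ici t) ≤ νW (Ici t) := fun t => by
    rw [Measure.map_apply hshift measurableSet_Ici, preimage_add_const_Ici,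
      ← ENNReal.toReal_le_toReal (measure_ne_top _ _) (measure_ne_top _ _), hνVchar, hνWchar,
      φ.finrank_eq]
    gcongr
    exact hrank t
  rw [← integral_map hshift.aemeasurable hmono.measurable.aestronglyMeasurable]
  exact integral_le_integral_of_measure_Ici_le hIci hmono hbound

/-- Let `(V, F)` and `(W, G)` be nonzero filtered vector
spaces, `φ : V ≃ W` a linear isomorphism and `a ∈ ℝ` with
`φ(F_t V) ⊆ G_{t+a} W` for all `t`. Then `ν_W ≻ τ_a ν_V`, i.e. for every
bounded increasing function `h` on `ℝ`,
`∫ h(x + a) ν_V(dx) ≤ ∫ h(x) ν_W(dx)`. -/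
theorem stmt2 {K V W : Type*} [Field K]
    [AddCommGroup V] [Module K V] [FiniteDimensional K V] [Nontrivial V]
    [AddCommGroup W] [Module K W] [FiniteDimensional K W] [Nontrivial W]
    (F : ℝ → Submodule K V) (G : ℝ → Submodule K W)
    (hF_anti : Antitone F)
    (hF_bot : ∃ t₀ : ℝ, ∀ t ≥ t₀, F t = ⊥)
    (hF_top : ∃ t₁ : ℝ, ∀ t ≤ t₁, F t = ⊤)
    (hF_leftcont : ∀ t : ℝ, F t = ⨅ (s : ℝ) (_ : s < t), F s)
    (hG_anti : Antitone G)
    (hG_bot : ∃ t₀ : ℝ, ∀ t ≥ t₀, G t = ⊥)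
    (hG_top : ∃ t₁ : ℝ, ∀ t ≤ t₁, G t = ⊤)
    (hG_leftcont : ∀ t : ℝ, G t = ⨅ (s : ℝ) (_ : s < t), G s)
    (φ : V ≃ₗ[K] W) (a : ℝ)
    (hcomp : ∀ t : ℝ, (F t).map (φ : V →ₗ[K] W) ≤ G (t + a))
    (νV νW : Measure ℝ)
    (hνV : IsProbabilityMeasure νV)
    (hνVchar : ∀ t : ℝ, (νV (Ici t)).toReal = (finrank K (F t) : ℝ) / finrank K V)
    (hνW : IsProbabilityMeasure νW)
    (hνWchar : ∀ t : ℝ, (νW (Ici t)).toReal = (finrank K (G t) : ℝ) / finrank K W)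
    (h : ℝ → ℝ) (hmono : Monotone h) (C : ℝ) (hbound : ∀ x, |h x| ≤ C) :
    (∫ x, h (x + a) ∂νV) ≤ ∫ x, h x ∂νW :=
  stmt2_general F G φ a hcomp νV νW hνV hνVchar hνW hνWchar h hmono C hbound
end

section
/- Let B be an approximable integral graded K-algebra with ℝ-filtrations making it f-quasi-filtered (f(n)/n → 0) and with sup_n λ_max(B_n)/n < ∞. Then the sequence (λ_max(B_n)/n)_{n≥1} converges in ℝ. -/
open Module Set Filter

/-!
Multiplying nonzero elements of degrees `p` (taken `q` times) and `r` in the integral algebra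
shows that `u n = λ_max(B_n)` satisfies `q (u p - f p) + (u r - f r) ≤ u (q p + r)`. Writing every
large `n` as `q p + r` with `r` in a fixed window of length `p` gives
`liminf u n / n ≥ (u p - f p) / p` for every `p`, while `u n / n ≤ (u n - f n) / n + f n / n`
trivially; since `f n / n → 0`, both bounds meet at `sup_p (u p - f p) / p`.
-/

/-- The `q`-fold form is needed: iterating the two-term inequality would accumulate the error
terms `f` at ever larger degrees. -/
def QuasiSuperadditive (u f : ℕ → ℝ) (M : ℕ) : Prop :=
  ∀ q p r : ℕ, 1 ≤ q → M ≤ p → M ≤ r → q * (u p - f p) + (u r - f r) ≤ u (q * p + r)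

namespace QuasiSuperadditive

variable {u f : ℕ → ℝ} {M : ℕ}

theorem exists_mul_div_sub_le (hu : QuasiSuperadditive u f M) {p : ℕ} (hp : M ≤ p)
    (hp0 : 0 < p) : ∃ K : ℝ, ∀ n ≥ M + p, n * ((u p - f p) / p) - K ≤ u n := by
  set c := u p - f p
  obtain ⟨K, hK⟩ := (Set.finite_range fun r : Fin (M + p) =>
    r * (c / p) - (u r - f r)).bddAbove
  refine ⟨K, fun n hn => ?_⟩
  obtain ⟨q, r, hq, hMr, hrp, rfl⟩ : ∃ q r, 1 ≤ q ∧ M ≤ r ∧ r < M + p ∧ q * p + r = n :=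
    ⟨(n - M) / p, M + (n - M) % p, (Nat.one_le_div_iff hp0).2 (by omega), by omega,
      by have := Nat.mod_lt (n - M) hp0; omega,
      by have := Nat.div_add_mod (n - M) p; rw [mul_comm]; omega⟩
  have hKr : r * (c / p) - (u r - f r) ≤ K := hK ⟨⟨r, hrp⟩, rfl⟩
  have hcast : ((q * p + r : ℕ) : ℝ) * (c / p) = q * c + r * (c / p) := by
    push_cast; field_simp
  have := hu q p r hq hp hMr
  rw [hcast]
  linarith

theorem tendsto_div (hu : QuasiSuperadditive u f M) (hM : 1 ≤ M) {C : ℝ}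
    (hC : ∀ n ≥ M, u n ≤ C * n) (hf0 : ∀ n, 0 ≤ f n)
    (hf : Tendsto (fun n : ℕ => f n / n) atTop (nhds 0)) :
    Tendsto (fun n : ℕ => u n / n) atTop
      (nhds (sSup ((fun p : ℕ => (u p - f p) / p) '' Ici M))) := by
  set T := (fun p : ℕ => (u p - f p) / p) '' Ici M
  have hTne : T.Nonempty := (nonempty_Ici).image _
  have hTbdd : BddAbove T := by
    refine ⟨C, ?_⟩
    rintro _ ⟨p, hp, rfl⟩
    have hp0 : (0 : ℝ) < p := by exact_mod_cast hM.trans hp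
    rw [div_le_iff₀ hp0]
    linarith [hC p hp, hf0 p]
  rw [tendsto_order]
  constructor
  · rintro a ha
    obtain ⟨_, ⟨p, hp, rfl⟩, hap⟩ := exists_lt_of_lt_csSup hTne ha
    have hp0 : 0 < p := hM.trans hp
    obtain ⟨K, hK⟩ := hu.exists_mul_div_sub_le hp hp0
    have hlim : Tendsto (fun n : ℕ => (u p - f p) / p - K * (1 / n)) atTop
        (nhds ((u p - f p) / p)) := by
      simpa using (tendsto_one_div_atTop_nhds_zero_nat.const_mul K).const_sub ((u p - f p) / p)
    filter_upwards [hlim.eventually (eventually_gt_nhds hap), eventually_ge_atTop (M + p)]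
      with n han hn
    have hn0 : (0 : ℝ) < n := by exact_mod_cast (show 0 < n by omega)
    calc a < (u p - f p) / p - K * (1 / n) := han
      _ = (n * ((u p - f p) / p) - K) / n := by field_simp
      _ ≤ u n / n := by gcongr; exact hK n hn
  · rintro b hb
    have hfb := hf.eventually (eventually_lt_nhds (show (0 : ℝ) < b - sSup T by linarith))
    filter_upwards [hfb, eventually_ge_atTop M] with n hfn hn
    have : (u n - f n) / n ≤ sSup T := le_csSup hTbdd ⟨n, hn, rfl⟩
    rw [sub_div] at this
    linarith

end QuasiSuperadditive

section Filtration

variable {K A : Type*} [CommSemiring K] [CommRing A] [Algebra K A]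

noncomputable def lambdaMax (F : ℕ → ℝ → Submodule K A) (n : ℕ) : ℝ :=
  sSup {t : ℝ | F n t ≠ ⊥}

variable {F : ℕ → ℝ → Submodule K A} {f : ℕ → ℝ} {n₀ : ℕ}

theorem pow_mul_mem_of_quasiFiltered
    (hqf : ∀ (l : ℕ), 2 ≤ l → ∀ (d : Fin l → ℕ) (t : Fin l → ℝ) (x : Fin l → A),
      (∀ i, n₀ ≤ d i) → (∀ i, x i ∈ F (d i) (t i)) →
      (∏ i, x i) ∈ F (∑ i, d i) (∑ i, (t i - f (d i))))
    {q p r : ℕ} (hq : 1 ≤ q) (hp : n₀ ≤ p) (hr : n₀ ≤ r) {tp tr : ℝ} {x y : A}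
    (hx : x ∈ F p tp) (hy : y ∈ F r tr) :
    x ^ q * y ∈ F (q * p + r) (q * (tp - f p) + (tr - f r)) := by
  have hmem := hqf (q + 1) (by omega) (Fin.snoc (fun _ => p) r) (Fin.snoc (fun _ => tp) tr)
    (Fin.snoc (fun _ => x) y)
    (Fin.lastCases (by simpa using hr) (fun _ => by simpa using hp))
    (Fin.lastCases (by simpa using hy) (fun _ => by simpa using hx))
  simpa only [Fin.prod_univ_castSucc, Fin.sum_univ_castSucc, Fin.snoc_castSucc, Fin.snoc_last,
    Finset.prod_const, Finset.sum_const, Finset.card_univ, Fintype.card_fin, smul_eq_mul,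
    nsmul_eq_mul] using hmem

theorem quasiSuperadditive_lambdaMax [NoZeroDivisors A]
    (hqf : ∀ (l : ℕ), 2 ≤ l → ∀ (d : Fin l → ℕ) (t : Fin l → ℝ) (x : Fin l → A),
      (∀ i, n₀ ≤ d i) → (∀ i, x i ∈ F (d i) (t i)) →
      (∏ i, x i) ∈ F (∑ i, d i) (∑ i, (t i - f (d i))))
    {M : ℕ} (hM : n₀ ≤ M) (hne : ∀ n ≥ M, {t : ℝ | F n t ≠ ⊥}.Nonempty)
    (hbdd : ∀ n ≥ M, BddAbove {t : ℝ | F n t ≠ ⊥}) :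
    QuasiSuperadditive (lambdaMax F) f M := by
  intro q p r hq hp hr
  set L := lambdaMax F (q * p + r)
  have hjump : ∀ tp ∈ {t : ℝ | F p t ≠ ⊥}, ∀ tr ∈ {t : ℝ | F r t ≠ ⊥},
      q * (tp - f p) + (tr - f r) ≤ L := by
    intro tp htp tr htr
    obtain ⟨x, hx, hx0⟩ := Submodule.exists_mem_ne_zero_of_ne_bot htp
    obtain ⟨y, hy, hy0⟩ := Submodule.exists_mem_ne_zero_of_ne_bot htr
    refine le_csSup (hbdd _ (hr.trans (Nat.le_add_left _ _))) fun hbot =>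
      mul_ne_zero (pow_ne_zero q hx0) hy0 ?_
    simpa [hbot] using pow_mul_mem_of_quasiFiltered hqf hq (hM.trans hp) (hM.trans hr) hx hy
  have hq0 : (0 : ℝ) < q := by exact_mod_cast hq
  have hjump_p : ∀ tp ∈ {t : ℝ | F p t ≠ ⊥}, q * (tp - f p) + (lambdaMax F r - f r) ≤ L :=
    fun tp htp => by
      have : lambdaMax F r ≤ L - q * (tp - f p) + f r :=
        csSup_le (hne r hr) fun tr htr => by linarith [hjump tp htp tr htr]
      linarith
  have : lambdaMax F p ≤ (L - (lambdaMax F r - f r)) / q + f p :=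
    csSup_le (hne p hp) fun tp htp => by
      rw [← sub_le_iff_le_add, le_div_iff₀ hq0]
      linarith [hjump_p tp htp]
  rw [← sub_le_iff_le_add, le_div_iff₀ hq0] at this
  linarith

end Filtration

theorem stmt13_general {K A : Type*} [Field K] [CommRing A] [IsDomain A] [Algebra K A]
    (𝒜 : ℕ → Submodule K A)
    (hne : ∃ N : ℕ, ∀ n ≥ N, 𝒜 n ≠ ⊥)
    (F : ℕ → ℝ → Submodule K A)
    (hF_top : ∀ n, ∃ t₁ : ℝ, ∀ t ≤ t₁, F n t = 𝒜 n)
    (f : ℕ → ℝ) (hf0 : ∀ n, 0 ≤ f n)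
    (hflim : Filter.Tendsto (fun n : ℕ => f n / n) Filter.atTop (nhds 0))
    (n₀ : ℕ)
    (hqf : ∀ (l : ℕ), 2 ≤ l → ∀ (d : Fin l → ℕ) (t : Fin l → ℝ) (x : Fin l → A),
      (∀ i, n₀ ≤ d i) → (∀ i, x i ∈ F (d i) (t i)) →
      (∏ i, x i) ∈ F (∑ i, d i) (∑ i, (t i - f (d i))))
    (hlmax : ∃ C : ℝ, ∀ n : ℕ, 1 ≤ n → ∀ t : ℝ, F n t ≠ ⊥ → t ≤ C * n) :
    ∃ ℓ : ℝ, Filter.Tendsto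
      (fun n : ℕ => sSup {t : ℝ | F n t ≠ ⊥} / n) Filter.atTop (nhds ℓ) := by
  obtain ⟨N, hN⟩ := hne
  obtain ⟨C, hC⟩ := hlmax
  set M := max N (max n₀ 1)
  have hM1 : 1 ≤ M := by omega
  have hSne : ∀ n ≥ M, {t : ℝ | F n t ≠ ⊥}.Nonempty := fun n hn => by
    obtain ⟨t₁, ht₁⟩ := hF_top n
    exact ⟨t₁, by rw [mem_ofPred_eq, ht₁ t₁ le_rfl]; exact hN n (by omega)⟩
  have hSbdd : ∀ n ≥ M, BddAbove {t : ℝ | F n t ≠ ⊥} := fun n hn =>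
    ⟨C * n, fun t ht => hC n (by omega) t ht⟩
  have hle : ∀ n ≥ M, lambdaMax F n ≤ C * n := fun n hn =>
    csSup_le (hSne n hn) fun t ht => hC n (by omega) t ht
  exact ⟨_, (quasiSuperadditive_lambdaMax hqf (by omega) hSne hSbdd).tendsto_div hM1 hle hf0
    hflim⟩

/-- Let `B` be an approximable integral graded `K`-algebra
with ℝ-filtrations making it `f`-quasi-filtered (`f(n)/n → 0`) and with
`sup_n λ_max(B_n)/n < ∞`. Then the sequence `(λ_max(B_n)/n)ₙ` converges in `ℝ`.
Here `λ_max(B_n) = sSup {t | F n t ≠ ⊥}`. -/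
theorem stmt13 {K A : Type*} [Field K] [CommRing A] [IsDomain A] [Algebra K A]
    (𝒜 : ℕ → Submodule K A) [GradedAlgebra 𝒜]
    (hfin : ∀ n, FiniteDimensional K ↥(𝒜 n))
    (hne : ∃ N : ℕ, ∀ n ≥ N, 𝒜 n ≠ ⊥)
    (happr : ∀ ε : ℝ, 0 < ε → ε < 1 → ∃ p₀ : ℕ, 1 ≤ p₀ ∧ ∀ p ≥ p₀,
      (1 - ε) < Filter.liminf
        (fun n : ℕ => (finrank K ↥((𝒜 p) ^ n) : ℝ) / (finrank K ↥(𝒜 (n * p)) : ℝ))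
        Filter.atTop)
    (F : ℕ → ℝ → Submodule K A)
    (hFle : ∀ n t, F n t ≤ 𝒜 n)
    (hF_anti : ∀ n, Antitone (F n))
    (hF_bot : ∀ n, ∃ t₀ : ℝ, ∀ t ≥ t₀, F n t = ⊥)
    (hF_top : ∀ n, ∃ t₁ : ℝ, ∀ t ≤ t₁, F n t = 𝒜 n)
    (hF_leftcont : ∀ n, ∀ t : ℝ, F n t = ⨅ (s : ℝ) (_ : s < t), F n s)
    (f : ℕ → ℝ) (hf0 : ∀ n, 0 ≤ f n)
    (hflim : Filter.Tendsto (fun n : ℕ => f n / n) Filter.atTop (nhds 0))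
    (n₀ : ℕ)
    (hqf : ∀ (l : ℕ), 2 ≤ l → ∀ (d : Fin l → ℕ) (t : Fin l → ℝ) (x : Fin l → A),
      (∀ i, n₀ ≤ d i) → (∀ i, x i ∈ F (d i) (t i)) →
      (∏ i, x i) ∈ F (∑ i, d i) (∑ i, (t i - f (d i))))
    (hlmax : ∃ C : ℝ, ∀ n : ℕ, 1 ≤ n → ∀ t : ℝ, F n t ≠ ⊥ → t ≤ C * n) :
    ∃ ℓ : ℝ, Filter.Tendsto
      (fun n : ℕ => sSup {t : ℝ | F n t ≠ ⊥} / n) Filter.atTop (nhds ℓ) :=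
  stmt13_general 𝒜 hne F hF_top f hf0 hflim n₀ hqf hlmax
end

section
/- Let 𝓛̄ be an arithmetically big Hermitian line bundle on a projective arithmetic variety 𝓧 of total dimension d over Spec O_K. Let λ ∈ ℝ with λ < μ̂^π_max(𝓛̄). Then for all sufficiently large n there exists a nonzero section s ∈ H⁰(𝓧, 𝓛^⊗n) with ‖s‖_{σ,sup} ≤ e^{−λn} for every embedding σ: K → ℂ; consequently B^{[λ]}_n ≠ 0 for sufficiently large n. -/
open Module NumberField Filter

/-- `e_max(π_*(𝓛^⊗n), sup-norms)`: the supremum of `t` such that there is a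
nonzero integral section of `𝓛^⊗n` of all sup-norms `≤ e^{-t}`. -/
noncomputable def emaxDeg {K A : Type*} [Field K] [NumberField K]
    [CommRing A] [Algebra K A]

    (ℰ : ℕ → Submodule (RingOfIntegers K) A)
    (nrm : ℕ → (K →+* ℂ) → A → ℝ) (n : ℕ) : ℝ :=
  sSup {t : ℝ | ∃ s ∈ ℰ n, s ≠ 0 ∧ ∀ σ : K →+* ℂ, nrm n σ s ≤ Real.exp (-t)}

/-- Let `𝓛̄` be an arithmetically big Hermitian line bundle
on a projective arithmetic variety over `Spec 𝓞_K`, modeled by: the total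
graded linear series (graded pieces `𝒜 n` of a graded integral `K`-algebra,
nonzero in large degrees since `L` is big), the lattices of integral sections
`ℰ n ⊆ 𝒜 n` (multiplicative, spanning `𝒜 n` over `K`), and submultiplicative
sup-norms.  Let `λ < μ̂^π_max(𝓛̄) = lim (1/n) e_max(π_*𝓛^⊗n)`.  Then for all
sufficiently large `n` there is a nonzero integral section `s` of `𝓛^⊗n` with
`‖s‖_{σ,sup} ≤ e^{-λn}` for every `σ : K → ℂ`; consequently
`B^{[λ]}_n ≠ 0` for large `n`. -/
theorem stmt16 {K A : Type*} [Field K] [NumberField K]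
    [CommRing A] [IsDomain A] [Algebra K A]
    (𝒜 : ℕ → Submodule K A) [GradedAlgebra 𝒜]
    (hfin : ∀ n, FiniteDimensional K ↥(𝒜 n))
    (hne : ∃ N : ℕ, ∀ n ≥ N, 𝒜 n ≠ ⊥)

    (ℰ : ℕ → Submodule (RingOfIntegers K) A)
    (hEsub : ∀ n, (ℰ n : Set A) ⊆ (𝒜 n : Set A))
    (hEspan : ∀ n, Submodule.span K (ℰ n : Set A) = 𝒜 n)
    (hEmul : ∀ (m n : ℕ) (x y : A), x ∈ ℰ m → y ∈ ℰ n → x * y ∈ ℰ (m + n))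
    (nrm : ℕ → (K →+* ℂ) → A → ℝ)
    (hnn : ∀ n σ x, 0 ≤ nrm n σ x)
    (hsubmul : ∀ (m n : ℕ) (σ : K →+* ℂ) (x y : A), x ∈ 𝒜 n → y ∈ 𝒜 m →
      nrm (n + m) σ (x * y) ≤ nrm n σ x * nrm m σ y)
    (mumax : ℝ)
    (hconv : Filter.Tendsto (fun n : ℕ => emaxDeg ℰ nrm n / n)
      Filter.atTop (nhds mumax))
    (lam : ℝ) (hlam : lam < mumax) :
    ∃ N : ℕ, ∀ n ≥ N, ∃ s ∈ ℰ n, s ≠ 0 ∧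
      ∀ σ : K →+* ℂ, nrm n σ s ≤ Real.exp (-lam * n) := by

  obtain ⟨N0, hN0⟩ := hne
  have hev : ∀ᶠ n : ℕ in atTop, lam < emaxDeg ℰ nrm n / n :=
    hconv.eventually (eventually_gt_nhds hlam)
  obtain ⟨N1, hN1⟩ := hev.exists_forall_of_atTop
  refine ⟨max (max N0 N1) 1, fun n hn => ?_⟩
  have hnN0 : N0 ≤ n := le_trans (le_trans (le_max_left _ _) (le_max_left _ _)) hn
  have hnN1 : N1 ≤ n := le_trans (le_trans (le_max_right _ _) (le_max_left _ _)) hn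
  have hn1 : (0:ℝ) < n := by
    have : 1 ≤ n := le_trans (le_max_right _ _) hn
    exact_mod_cast this
  have hlt : lam * n < emaxDeg ℰ nrm n := by
    have := hN1 n hnN1
    calc lam * n < (emaxDeg ℰ nrm n / n) * n := by
          exact mul_lt_mul_of_pos_right this hn1
      _ = emaxDeg ℰ nrm n := by field_simp
  set S := {t : ℝ | ∃ s ∈ ℰ n, s ≠ 0 ∧ ∀ σ : K →+* ℂ, nrm n σ s ≤ Real.exp (-t)} with hS
  -- S is nonempty
  have hAne := hN0 n hnN0
  have hEne : ∃ s ∈ ℰ n, s ≠ (0:A) := by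
    by_contra h
    push_neg at h
    apply hAne
    rw [← hEspan n]
    rw [Submodule.span_eq_bot]
    intro x hx
    exact h x hx
  obtain ⟨s, hsE, hs0⟩ := hEne
  have hSne : S.Nonempty := by
    refine ⟨-Real.log ((∑ σ : K →+* ℂ, nrm n σ s) + 1), s, hsE, hs0, fun σ => ?_⟩
    have hpos : (0:ℝ) < (∑ σ : K →+* ℂ, nrm n σ s) + 1 := by
      have : (0:ℝ) ≤ ∑ σ : K →+* ℂ, nrm n σ s :=
        Finset.sum_nonneg fun σ _ => hnn n σ s
      linarith
    rw [neg_neg, Real.exp_log hpos]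
    have : nrm n σ s ≤ ∑ σ : K →+* ℂ, nrm n σ s :=
      Finset.single_le_sum (fun σ _ => hnn n σ s) (Finset.mem_univ σ)
    linarith
  -- extract an element t ∈ S with lam * n < t
  have hex : ∃ t ∈ S, lam * n < t := by
    exact exists_lt_of_lt_csSup hSne hlt
  obtain ⟨t, ⟨s', hs'E, hs'0, hs'nrm⟩, htlt⟩ := hex
  refine ⟨s', hs'E, hs'0, fun σ => ?_⟩
  refine le_trans (hs'nrm σ) ?_
  apply Real.exp_le_exp.mpr
  rw [neg_mul]
  linarith
end
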